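/- arXiv:1709.06685 — 5 statements merged into one kernel-verified Lean document; each statement's English description precedes it below -/
import Mathlib

section
/- Let x ∈ ℝᴺ with first coordinate a and truncation x' ∈ ℝ^{N-1} (so x = (a, x')). Let B = (z | P) be an n×N matrix with first column z ∈ ℝⁿ and P an n×(N-1) matrix with PP^T invertible. Then x^T (I_N - B^T (BB^T)^{-1} B) x = (x')^T (I_{N-1} - P^T (PP^T)^{-1} P) x' + (a - z^T (PP^T)^{-1} P x')² / (1 + z^T (PP^T)^{-1} z). -/
/-!
Since `B Bᵀ = P Pᵀ + z zᵀ` is a rank-one update of `S = P Pᵀ`, the Sherman–Morrison formula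
gives `w ⬝ (B Bᵀ)⁻¹ w = w ⬝ S⁻¹ w - (z ⬝ S⁻¹ w)² / (1 + z ⬝ S⁻¹ z)`; the denominator is
at least `1` because `S⁻¹` is positive semidefinite. Substituting `w = B x = a z + P x'` and
expanding, both sides become the same rational function of `a`, `z ⬝ S⁻¹ z`, `z ⬝ S⁻¹ P x'`
and `P x' ⬝ S⁻¹ P x'`.
-/

open Matrix

namespace Matrix

variable {K m l : Type*} [Field K] [Fintype m] [Fintype l]

theorem dotProduct_one_sub_transpose_mul_mul_mulVec [DecidableEq l] (A : Matrix m m K)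
    (D : Matrix m l K) (v : l → K) :
    v ⬝ᵥ ((1 - Dᵀ * A * D) *ᵥ v) = v ⬝ᵥ v - D *ᵥ v ⬝ᵥ A *ᵥ D *ᵥ v := by
  rw [sub_mulVec, one_mulVec, dotProduct_sub, Matrix.mul_assoc, ← mulVec_mulVec,
    dotProduct_mulVec, vecMul_transpose, mulVec_mulVec]

theorem IsSymm.dotProduct_mulVec_comm {A : Matrix m m K} (hA : A.IsSymm) (v w : m → K) :
    v ⬝ᵥ A *ᵥ w = w ⬝ᵥ A *ᵥ v := by
  rw [dotProduct_mulVec, ← mulVec_transpose, hA.eq, dotProduct_comm]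

theorem inv_add_vecMulVec [DecidableEq m] {A : Matrix m m K} (hA : IsUnit A.det) (u v : m → K)
    (h : 1 + v ⬝ᵥ A⁻¹ *ᵥ u ≠ 0) :
    (A + vecMulVec u v)⁻¹ =
      A⁻¹ - (1 + v ⬝ᵥ A⁻¹ *ᵥ u)⁻¹ • vecMulVec (A⁻¹ *ᵥ u) (v ᵥ* A⁻¹) := by
  refine inv_eq_right_inv ?_
  rw [mul_sub, add_mul, add_mul, mul_nonsing_inv A hA, Matrix.mul_smul, Matrix.mul_smul,
    mul_vecMulVec, mulVec_mulVec, mul_nonsing_inv A hA, one_mulVec, vecMulVec_mul_vecMulVec,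
    vecMulVec_mul, vecMulVec_smul]
  set β := v ⬝ᵥ A⁻¹ *ᵥ u
  match_scalars
  · rfl
  · field_simp
    ring

theorem dotProduct_inv_add_vecMulVec_self_mulVec [DecidableEq m] {A : Matrix m m K}
    (hA : IsUnit A.det) (hAs : A.IsSymm) (u w : m → K) (h : 1 + u ⬝ᵥ A⁻¹ *ᵥ u ≠ 0) :
    w ⬝ᵥ (A + vecMulVec u u)⁻¹ *ᵥ w =
      w ⬝ᵥ A⁻¹ *ᵥ w - (u ⬝ᵥ A⁻¹ *ᵥ w) ^ 2 / (1 + u ⬝ᵥ A⁻¹ *ᵥ u) := by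
  rw [inv_add_vecMulVec hA u u h, sub_mulVec, smul_mulVec, vecMulVec_mulVec, dotProduct_sub,
    dotProduct_smul, op_smul_eq_smul, dotProduct_smul, ← dotProduct_mulVec,
    hAs.inv.dotProduct_mulVec_comm w u, smul_eq_mul, smul_eq_mul]
  ring

end Matrix

/-- Squared-distance decomposition: with `x = (a, x')` and `B = (z | P)`,
`xᵀ(I - Bᵀ(BBᵀ)⁻¹B)x = x'ᵀ(I - Pᵀ(PPᵀ)⁻¹P)x' + (a - zᵀ(PPᵀ)⁻¹Px')²/(1 + zᵀ(PPᵀ)⁻¹z)`. -/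
theorem stmt1 (n k : ℕ) (a : ℝ) (x' : Fin k → ℝ)
    (z : Fin n → ℝ) (P : Matrix (Fin n) (Fin k) ℝ)
    (hP : IsUnit (P * Pᵀ).det)
    (B : Matrix (Fin n) (Fin 1 ⊕ Fin k) ℝ)
    (hB : B = Matrix.fromCols (Matrix.of fun i (_ : Fin 1) => z i) P)
    (x : Fin 1 ⊕ Fin k → ℝ) (hx : x = Sum.elim (fun _ => a) x') :
    x ⬝ᵥ ((1 - Bᵀ * (B * Bᵀ)⁻¹ * B) *ᵥ x) =
      x' ⬝ᵥ ((1 - Pᵀ * (P * Pᵀ)⁻¹ * P) *ᵥ x') +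
        (a - z ⬝ᵥ ((P * Pᵀ)⁻¹ *ᵥ (P *ᵥ x'))) ^ 2 /
          (1 + z ⬝ᵥ ((P * Pᵀ)⁻¹ *ᵥ z)) := by
  change B = fromCols (replicateCol (Fin 1) z) P at hB
  have hS : (P * Pᵀ).IsSymm := by
    rw [IsSymm, transpose_mul, transpose_transpose]
  have hα : 1 + z ⬝ᵥ (P * Pᵀ)⁻¹ *ᵥ z ≠ 0 := by
    have := (posSemidef_self_mul_conjTranspose P).inv.dotProduct_mulVec_nonneg z
    simp only [conjTranspose_eq_transpose_of_trivial, star_trivial] at this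
    exact (lt_add_of_pos_of_le one_pos this).ne'
  have hBB : B * Bᵀ = P * Pᵀ + vecMulVec z z := by
    rw [hB, transpose_fromCols, fromCols_mul_fromRows, transpose_replicateCol,
      vecMulVec_eq (Fin 1), add_comm]
    rfl
  have hBx : B *ᵥ x = a • z + P *ᵥ x' := by
    rw [hB, hx, fromCols_mulVec_sumElim]
    congr 1
    ext i
    simp [mulVec, dotProduct, mul_comm]
  have ha : (fun _ : Fin 1 => a) ⬝ᵥ (fun _ => a) = a ^ 2 := by simp [dotProduct, sq]
  rw [dotProduct_one_sub_transpose_mul_mul_mulVec, dotProduct_one_sub_transpose_mul_mul_mulVec,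
    hBx, hBB, dotProduct_inv_add_vecMulVec_self_mulVec hP hS _ _ hα, hx,
    sumElim_dotProduct_sumElim, ha]
  simp only [mulVec_add, mulVec_smul, dotProduct_add, add_dotProduct, dotProduct_smul,
    smul_dotProduct, hS.inv.dotProduct_mulVec_comm (P *ᵥ x') z, smul_eq_mul]
  field_simp
  ring
end

section
/- Let P be an n×(N-1) matrix whose first column is w = (x₀, z) with x₀ ∈ ℝ, z ∈ ℝ^{n-1}, and whose remaining columns form Q = (y^T row on top of R), where y ∈ ℝ^{N-2} and R is (n-1)×(N-2). Assume RR^T is invertible and d² := y y^T - y R^T (RR^T)^{-1} R y^T ≠ 0. Then the (1,1) entry of (PP^T)^{-1} P equals (x₀ - y R^T (RR^T)^{-1} z) / (d² (1 + z^T (RR^T)^{-1} z) + (x₀ - y R^T (RR^T)^{-1} z)²), provided the denominator is nonzero. -/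
open Matrix

/-- Formula for the (1,1) entry of `(PPᵀ)⁻¹P` where `P = fromBlocks x₀ y z R`. -/
theorem stmt4 (p k : ℕ) (x₀ : ℝ) (z : Fin p → ℝ) (y : Fin k → ℝ)
    (R : Matrix (Fin p) (Fin k) ℝ) (hR : IsUnit (R * Rᵀ).det)
    (P : Matrix (Fin 1 ⊕ Fin p) (Fin 1 ⊕ Fin k) ℝ)
    (hP : P = Matrix.fromBlocks (Matrix.of fun (_ : Fin 1) (_ : Fin 1) => x₀)
        (Matrix.of fun (_ : Fin 1) j => y j)
        (Matrix.of fun i (_ : Fin 1) => z i) R)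
    (d2 : ℝ) (hd2 : d2 = y ⬝ᵥ y - (R *ᵥ y) ⬝ᵥ ((R * Rᵀ)⁻¹ *ᵥ (R *ᵥ y)))
    (hd : d2 ≠ 0)
    (num den : ℝ)
    (hnum : num = x₀ - (R *ᵥ y) ⬝ᵥ ((R * Rᵀ)⁻¹ *ᵥ z))
    (hden : den = d2 * (1 + z ⬝ᵥ ((R * Rᵀ)⁻¹ *ᵥ z)) + num ^ 2)
    (hden0 : den ≠ 0) :
    ((P * Pᵀ)⁻¹ * P) (Sum.inl 0) (Sum.inl 0) = num / den := by
  have hSsymm : (R * Rᵀ)ᵀ = R * Rᵀ := by rw [transpose_mul, transpose_transpose]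
  have hSinv : ((R * Rᵀ)⁻¹)ᵀ = (R * Rᵀ)⁻¹ := by
    rw [transpose_nonsing_inv, hSsymm]
  have hSS : ∀ v : Fin p → ℝ, (R * Rᵀ) *ᵥ ((R * Rᵀ)⁻¹ *ᵥ v) = v := fun v => by
    rw [mulVec_mulVec, mul_nonsing_inv _ hR, one_mulVec]
  have hSS' : ∀ v : Fin p → ℝ, (R * Rᵀ)⁻¹ *ᵥ ((R * Rᵀ) *ᵥ v) = v := fun v => by
    rw [mulVec_mulVec, nonsing_inv_mul _ hR, one_mulVec]
  have hvm : ∀ u : Fin p → ℝ, u ᵥ* (R * Rᵀ)⁻¹ = (R * Rᵀ)⁻¹ *ᵥ u := by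
    intro u
    conv_lhs => rw [← hSinv]
    rw [vecMul_transpose]
  have hswap : ∀ u v : Fin p → ℝ,
      u ⬝ᵥ ((R * Rᵀ)⁻¹ *ᵥ v) = v ⬝ᵥ ((R * Rᵀ)⁻¹ *ᵥ u) := by
    intro u v
    rw [dotProduct_mulVec, hvm, dotProduct_comm]
  -- abbreviations
  set w1 : Fin p → ℝ := (R * Rᵀ)⁻¹ *ᵥ z with hw1
  set w2 : Fin p → ℝ := (R * Rᵀ)⁻¹ *ᵥ (R *ᵥ y) with hw2
  set a : ℝ := z ⬝ᵥ w1 with ha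
  set b : ℝ := (R *ᵥ y) ⬝ᵥ w1 with hb
  set c : ℝ := (R *ᵥ y) ⬝ᵥ w2 with hc
  have hzw2 : z ⬝ᵥ w2 = b := by rw [hw2, hb, hw1, hswap]
  -- the matrix M = P * Pᵀ as blocks
  have hM : P * Pᵀ = fromBlocks (of fun _ _ => x₀ * x₀ + y ⬝ᵥ y)
      (of fun _ i => x₀ * z i + (R *ᵥ y) i)
      (of fun i _ => x₀ * z i + (R *ᵥ y) i)
      (vecMulVec z z + R * Rᵀ) := by
    rw [hP, fromBlocks_transpose, fromBlocks_multiply]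
    ext i j
    rcases i with i | i <;> rcases j with j | j <;>
      simp [mul_apply, vecMulVec_apply, mulVec, dotProduct, mul_comm]
  -- the candidate first row of M⁻¹
  set u2 : Fin p → ℝ := (-(num / den)) • w1 + (-((1 + a) / den)) • w2 with hu2
  set U : Fin 1 ⊕ Fin p → ℝ := Sum.elim (fun _ => (1 + a) / den) u2 with hU
  have hzu2 : z ⬝ᵥ u2 = -(num / den) * a - ((1 + a) / den) * b := by
    rw [hu2, dotProduct_add, dotProduct_smul, dotProduct_smul, hzw2, ← ha]
    simp [smul_eq_mul]; ring
  have hyu2 : (R *ᵥ y) ⬝ᵥ u2 = -(num / den) * b - ((1 + a) / den) * c := by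
    rw [hu2, dotProduct_add, dotProduct_smul, dotProduct_smul, ← hb, ← hc]
    simp [smul_eq_mul]; ring
  have hSu2 : (R * Rᵀ) *ᵥ u2 = (-(num / den)) • z + (-((1 + a) / den)) • (R *ᵥ y) := by
    rw [hu2, mulVec_add, mulVec_smul, mulVec_smul, hw1, hw2, hSS, hSS]
  have hvvz : ∀ v : Fin p → ℝ, vecMulVec z z *ᵥ v = (z ⬝ᵥ v) • z := by
    intro v
    funext i
    simp only [mulVec, dotProduct, vecMulVec_apply, Pi.smul_apply, smul_eq_mul,
      Finset.sum_mul, Finset.mul_sum]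
    exact Finset.sum_congr rfl fun j _ => by ring
  have hnum' : num = x₀ - b := hnum
  have hden' : den = d2 * (1 + a) + num ^ 2 := hden
  have hd2' : d2 = y ⬝ᵥ y - c := hd2
  have hMu : (P * Pᵀ) *ᵥ U = Pi.single (Sum.inl 0) 1 := by
    rw [hM, hU, fromBlocks_mulVec, Sum.elim_comp_inl, Sum.elim_comp_inr]
    funext j
    rcases j with i | i
    · have h1 : ((of fun (_ : Fin 1) (_ : Fin 1) => x₀ * x₀ + y ⬝ᵥ y) *ᵥ
          (fun _ => (1 + a) / den)) i = (x₀ * x₀ + y ⬝ᵥ y) * ((1 + a) / den) := by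
        simp [mulVec, dotProduct]
      have h2 : ((of fun (_ : Fin 1) i => x₀ * z i + (R *ᵥ y) i) *ᵥ u2) i =
          x₀ * (z ⬝ᵥ u2) + (R *ᵥ y) ⬝ᵥ u2 := by
        simp only [mulVec, of_apply, dotProduct, add_mul, mul_assoc,
          Finset.sum_add_distrib, Finset.mul_sum]
      have hi : i = 0 := Subsingleton.elim _ _
      subst hi
      simp only [Sum.elim_inl, Pi.add_apply, h1, h2, hzu2, hyu2, Pi.single_eq_same]
      field_simp
      rw [hden', hd2', hnum']
      ring
    · have h1 : ((of fun i (_ : Fin 1) => x₀ * z i + (R *ᵥ y) i) *ᵥ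
          (fun _ => (1 + a) / den)) i = (x₀ * z i + (R *ᵥ y) i) * ((1 + a) / den) := by
        simp [mulVec, dotProduct]
      have hsingle : (Pi.single (Sum.inl 0) 1 : Fin 1 ⊕ Fin p → ℝ) (Sum.inr i) = 0 := by
        simp [Pi.single_apply]
      rw [hsingle]
      simp only [Sum.elim_inr, Pi.add_apply, h1, add_mulVec, hvvz, hSu2, hzu2,
        Pi.smul_apply, smul_eq_mul]
      field_simp
      rw [hnum']
      ring
  -- M is invertible
  have hdet : IsUnit (P * Pᵀ).det := by
    rw [isUnit_iff_ne_zero]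
    intro h0
    obtain ⟨v, hv0, hv⟩ := Matrix.exists_mulVec_eq_zero_iff.2 h0
    have hPv : Pᵀ *ᵥ v = 0 := by
      have h1 : v ⬝ᵥ ((P * Pᵀ) *ᵥ v) = 0 := by rw [hv, dotProduct_zero]
      rw [← mulVec_mulVec, dotProduct_mulVec, ← mulVec_transpose] at h1
      exact dotProduct_self_eq_zero.mp h1
    set c0 : ℝ := v (Sum.inl 0) with hc0
    set cc : Fin p → ℝ := v ∘ Sum.inr with hcc
    have hyeq : c0 • y + Rᵀ *ᵥ cc = 0 := by
      funext j
      have h2 := congrFun hPv (Sum.inr j)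
      simp only [hP, fromBlocks_transpose, mulVec, dotProduct, Fintype.sum_sum_type,
        Fin.sum_univ_one, fromBlocks_apply₁₁, fromBlocks_apply₁₂, fromBlocks_apply₂₁,
        fromBlocks_apply₂₂, transpose_apply, of_apply, Pi.zero_apply] at h2
      simp only [Pi.add_apply, Pi.smul_apply, smul_eq_mul, mulVec, dotProduct,
        transpose_apply, Pi.zero_apply, hcc, hc0, Function.comp_apply]
      linear_combination h2
    have hReq : c0 • (R *ᵥ y) + (R * Rᵀ) *ᵥ cc = 0 := by
      have h3 := congrArg (fun w => R *ᵥ w) hyeq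
      simpa [mulVec_add, mulVec_smul, mulVec_mulVec] using h3
    have hcc2 : cc = (-c0) • w2 := by
      have h4 : (R * Rᵀ) *ᵥ cc = (-c0) • (R *ᵥ y) := by
        have h := hReq
        rw [add_comm, add_eq_zero_iff_eq_neg] at h
        rw [h]
        exact (neg_smul _ _).symm
      have h5 := congrArg (fun w => (R * Rᵀ)⁻¹ *ᵥ w) h4
      simp only [hSS'] at h5
      rw [mulVec_smul] at h5
      rw [hw2]
      exact h5
    have hc00 : c0 = 0 := by
      have h6 := congrArg (fun w => y ⬝ᵥ w) hyeq
      have h7 : y ⬝ᵥ (Rᵀ *ᵥ w2) = c := by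
        rw [dotProduct_mulVec, vecMul_transpose]
      simp only [dotProduct_add, dotProduct_smul, smul_eq_mul, hcc2, mulVec_smul,
        dotProduct_zero, h7] at h6
      have : c0 * (y ⬝ᵥ y - c) = 0 := by linear_combination h6
      rw [← hd2'] at this
      rcases mul_eq_zero.mp this with h | h
      · exact h
      · exact absurd h hd
    have : v = 0 := by
      funext j
      rcases j with i | i
      · have hi : i = 0 := Subsingleton.elim _ _
        subst hi
        exact hc00
      · have : cc = 0 := by rw [hcc2, hc00]; simp
        exact congrFun this i
    exact hv0 this
  -- conclude
  have hU' : U = (P * Pᵀ)⁻¹ *ᵥ Pi.single (Sum.inl 0) 1 := by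
    rw [← hMu, mulVec_mulVec, nonsing_inv_mul _ hdet, one_mulVec]
  have hMsymm : ((P * Pᵀ)⁻¹)ᵀ = (P * Pᵀ)⁻¹ := by
    rw [transpose_nonsing_inv, transpose_mul, transpose_transpose]
  have hrow : ∀ j, (P * Pᵀ)⁻¹ (Sum.inl 0) j = U j := by
    intro j
    have h1 : (P * Pᵀ)⁻¹ (Sum.inl 0) j = (P * Pᵀ)⁻¹ j (Sum.inl 0) := by
      conv_lhs => rw [← hMsymm]
      exact transpose_apply _ _ _
    rw [h1, hU']
    simp [mulVec_single]
  rw [mul_apply]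
  have hPcol : ∀ j, P j (Sum.inl 0) = Sum.elim (fun _ => x₀) z j := by
    intro j
    rcases j with i | i <;> simp [hP]
  calc ∑ j, (P * Pᵀ)⁻¹ (Sum.inl 0) j * P j (Sum.inl 0)
      = ∑ j, U j * Sum.elim (fun _ => x₀) z j := by
        refine Finset.sum_congr rfl fun j _ => by rw [hrow, hPcol]
    _ = (1 + a) / den * x₀ + u2 ⬝ᵥ z := by
        rw [Fintype.sum_sum_type]
        simp [hU, dotProduct]
    _ = num / den := by
        have hu2z : u2 ⬝ᵥ z = -(num / den) * a - ((1 + a) / den) * b := by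
          rw [dotProduct_comm]; exact hzu2
        rw [hu2z, hnum']
        field_simp
        ring
end

section
/- With the notation of the previous statement (P with first column w = (x₀,z), Q with top row y and remaining rows R, RR^T invertible, d² ≠ 0): 1 + w^T (QQ^T)^{-1} w = 1 + z^T (RR^T)^{-1} z + d^{-2} (x₀ - y R^T (RR^T)^{-1} z)². -/
/-!
`QQᵀ` is the block matrix `[[yyᵀ, yRᵀ], [Ryᵀ, RRᵀ]]`. Inverting it blockwise around `RRᵀ`
completes the square in the quadratic form: `wᵀ(QQᵀ)⁻¹w = zᵀ(RRᵀ)⁻¹z + uᵀS⁻¹u`, where `S` is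
the Schur complement of `RRᵀ` and `u = x₀ - yRᵀ(RRᵀ)⁻¹z`. Here `S` is the `1 × 1` matrix `(d²)`.
-/

open Matrix

theorem dotProduct_invOf_fromBlocks₂₂_mulVec {m n α : Type*} [Fintype m] [Fintype n]
    [DecidableEq m] [DecidableEq n] [CommRing α]
    (A : Matrix m m α) (B : Matrix m n α) (C : Matrix n m α) (D : Matrix n n α)
    [Invertible D] [Invertible (A - B * ⅟D * C)] [Invertible (fromBlocks A B C D)]
    (x : m → α) (z : n → α) :
    Sum.elim x z ⬝ᵥ (⅟(fromBlocks A B C D) *ᵥ Sum.elim x z) =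
      z ⬝ᵥ (⅟D *ᵥ z) +
        (x - z ᵥ* (⅟D * C)) ⬝ᵥ (⅟(A - B * ⅟D * C) *ᵥ (x - (B * ⅟D) *ᵥ z)) := by
  rw [invOf_fromBlocks₂₂_eq, fromBlocks_mulVec, sumElim_dotProduct_sumElim]
  simp only [Sum.elim_comp_inl, Sum.elim_comp_inr, add_mulVec, neg_mulVec, mulVec_sub,
    dotProduct_add, dotProduct_neg, dotProduct_sub, sub_dotProduct, dotProduct_mulVec,
    vecMul_vecMul, sub_vecMul, Matrix.mul_assoc]
  abel

theorem dotProduct_inv_fromRows_mul_transpose_mulVec {m n k α : Type*} [Fintype m] [Fintype n]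
    [Fintype k] [DecidableEq m] [DecidableEq n] [CommRing α]
    (Y : Matrix m k α) (R : Matrix n k α) (hR : IsUnit (R * Rᵀ).det)
    (hS : IsUnit (Y * Yᵀ - Y * Rᵀ * (R * Rᵀ)⁻¹ * (R * Yᵀ)).det) (x : m → α) (z : n → α) :
    Sum.elim x z ⬝ᵥ ((fromRows Y R * (fromRows Y R)ᵀ)⁻¹ *ᵥ Sum.elim x z) =
      z ⬝ᵥ ((R * Rᵀ)⁻¹ *ᵥ z) +
        (x - Y *ᵥ (Rᵀ *ᵥ ((R * Rᵀ)⁻¹ *ᵥ z))) ⬝ᵥ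
          ((Y * Yᵀ - Y * Rᵀ * (R * Rᵀ)⁻¹ * (R * Yᵀ))⁻¹ *ᵥ
            (x - Y *ᵥ (Rᵀ *ᵥ ((R * Rᵀ)⁻¹ *ᵥ z)))) := by
  let := invertibleOfIsUnitDet _ hR
  rw [← invOf_eq_nonsing_inv (R * Rᵀ)] at hS ⊢
  let := invertibleOfIsUnitDet _ hS
  let := fromBlocks₂₂Invertible (Y * Yᵀ) (Y * Rᵀ) (R * Yᵀ) (R * Rᵀ)
  have hsymm : (⅟(R * Rᵀ))ᵀ = ⅟(R * Rᵀ) := by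
    rw [invOf_eq_nonsing_inv, transpose_nonsing_inv, transpose_mul, transpose_transpose]
  rw [transpose_fromRows, fromRows_mul_fromCols, ← invOf_eq_nonsing_inv, ← invOf_eq_nonsing_inv,
    dotProduct_invOf_fromBlocks₂₂_mulVec]
  congr 3
  · simp only [← vecMul_transpose, transpose_transpose, hsymm, vecMul_vecMul, Matrix.mul_assoc]
  · simp only [mulVec_mulVec, Matrix.mul_assoc]

theorem dotProduct_inv_mulVec_of_unique {m α : Type*} [Fintype m] [Unique m] [DecidableEq m]
    [Field α] (S : Matrix m m α) (u v : m → α) :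
    u ⬝ᵥ (S⁻¹ *ᵥ v) = (S default default)⁻¹ * (u default * v default) := by
  simp only [dotProduct, Finset.univ_unique, inv_subsingleton, Ring.inverse_eq_inv',
    mulVec_diagonal, Finset.sum_singleton]
  ring

/-- `1 + wᵀ(QQᵀ)⁻¹w = 1 + zᵀ(RRᵀ)⁻¹z + d⁻²(x₀ - yRᵀ(RRᵀ)⁻¹z)²`, where `w = (x₀, z)`
and `Q` has first row `y` and remaining rows `R`. -/
theorem stmt5 (p k : ℕ) (x₀ : ℝ) (z : Fin p → ℝ) (y : Fin k → ℝ)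
    (R : Matrix (Fin p) (Fin k) ℝ) (hR : IsUnit (R * Rᵀ).det)
    (Q : Matrix (Fin 1 ⊕ Fin p) (Fin k) ℝ)
    (hQ : Q = Matrix.fromRows (Matrix.of fun (_ : Fin 1) j => y j) R)
    (d2 : ℝ) (hd2 : d2 = y ⬝ᵥ y - (R *ᵥ y) ⬝ᵥ ((R * Rᵀ)⁻¹ *ᵥ (R *ᵥ y)))
    (hd : d2 ≠ 0)
    (w : Fin 1 ⊕ Fin p → ℝ) (hw : w = Sum.elim (fun _ => x₀) z) :
    1 + w ⬝ᵥ ((Q * Qᵀ)⁻¹ *ᵥ w) =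
      1 + z ⬝ᵥ ((R * Rᵀ)⁻¹ *ᵥ z) +
        d2⁻¹ * (x₀ - (R *ᵥ y) ⬝ᵥ ((R * Rᵀ)⁻¹ *ᵥ z)) ^ 2 := by
  set Y : Matrix (Fin 1) (Fin k) ℝ := Matrix.of fun _ j => y j
  -- Entries of products with the row matrix `Y` unfold definitionally to dot products with `y`.
  have hSchur : (Y * Yᵀ - Y * Rᵀ * (R * Rᵀ)⁻¹ * (R * Yᵀ)) 0 0 = d2 := by
    change y ⬝ᵥ y - (y ᵥ* Rᵀ ᵥ* (R * Rᵀ)⁻¹) ⬝ᵥ (R *ᵥ y) = d2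
    rw [vecMul_transpose, ← dotProduct_mulVec, hd2]
  have hS : IsUnit (Y * Yᵀ - Y * Rᵀ * (R * Rᵀ)⁻¹ * (R * Yᵀ)).det := by
    rwa [det_fin_one, hSchur, isUnit_iff_ne_zero]
  have hu : (fun _ => x₀) - Y *ᵥ (Rᵀ *ᵥ ((R * Rᵀ)⁻¹ *ᵥ z)) =
      fun _ => x₀ - (R *ᵥ y) ⬝ᵥ ((R * Rᵀ)⁻¹ *ᵥ z) := by
    ext
    change x₀ - y ⬝ᵥ (Rᵀ *ᵥ ((R * Rᵀ)⁻¹ *ᵥ z)) = _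
    rw [dotProduct_mulVec, vecMul_transpose]
  subst hQ hw
  rw [dotProduct_inv_fromRows_mul_transpose_mulVec Y R hR hS, hu,
    dotProduct_inv_mulVec_of_unique (Y * Yᵀ - _), Fin.default_eq_zero, hSchur]
  ring
end

section
/- Let x ∈ S^{n-1} be incompressible with parameters c₀, c₁ ∈ (0,1), i.e. the Euclidean distance from x to every vector with at most c₀n nonzero coordinates is at least c₁. Then there exists a set σ ⊆ {1,…,n} with |σ| ≥ c₀c₁²n/2 such that c₁/√(2n) ≤ |x_k| ≤ 1/√(c₀ n) for all k ∈ σ. -/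
/-!
With `a = 1/√(c₀n)`, Chebyshev's inequality gives at most `c₀n` coordinates with `|x_k| > a`,
so keeping only those coordinates of `x` yields a sparse vector; incompressibility then leaves mass `≥ c₁²`
on the coordinates with `|x_k| ≤ a`. Those below `b = c₁/√(2n)` carry mass at most `n b² = c₁²/2`,
so the coordinates in `[b, a]` carry mass `≥ c₁²/2`, each at most `a² = 1/(c₀n)`.
-/

open Finset

namespace SpreadCoordinates

variable {ι : Type*}

lemma sum_sq_le_card_mul_sq {s : Finset ι} {x : ι → ℝ} {a : ℝ} (h : ∀ i ∈ s, |x i| ≤ a) :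
    ∑ i ∈ s, x i ^ 2 ≤ #s * a ^ 2 := by
  simpa using sum_le_card_nsmul s (fun i => x i ^ 2) (a ^ 2) fun i hi =>
    sq_abs (x i) ▸ pow_le_pow_left₀ (abs_nonneg _) (h i hi) 2

lemma card_mul_sq_le_sum_sq {s : Finset ι} {x : ι → ℝ} {a : ℝ} (ha : 0 ≤ a)
    (h : ∀ i ∈ s, a ≤ |x i|) : #s * a ^ 2 ≤ ∑ i ∈ s, x i ^ 2 := by
  simpa using card_nsmul_le_sum s (fun i => x i ^ 2) (a ^ 2) fun i hi =>
    sq_abs (x i) ▸ pow_le_pow_left₀ ha (h i hi) 2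

variable [Fintype ι]

lemma card_filter_lt_abs_mul_sq_le (x : ι → ℝ) {a : ℝ} (ha : 0 ≤ a) :
    #{i | a < |x i|} * a ^ 2 ≤ ∑ i, x i ^ 2 :=
  (card_mul_sq_le_sum_sq ha fun _ hi => (mem_filter.1 hi).2.le).trans <|
    sum_le_sum_of_subset_of_nonneg (subset_univ _) fun _ _ _ => sq_nonneg _

lemma sum_sq_sub_ite (x : ι → ℝ) (p : ι → Prop) [DecidablePred p] :
    ∑ i, (x i - if p i then x i else 0) ^ 2 = ∑ i with ¬p i, x i ^ 2 := by
  rw [sum_filter]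
  refine sum_congr rfl fun i _ => ?_
  split_ifs <;> simp

lemma sq_le_sum_sq_filter_not_of_dist_sparse {x : ι → ℝ} {c r : ℝ} (hc : 0 ≤ c)
    (hinc : ∀ y : ι → ℝ, (#{i | y i ≠ 0} : ℝ) ≤ r → c ≤ √(∑ i, (x i - y i) ^ 2))
    (p : ι → Prop) [DecidablePred p] (hp : (#{i | p i} : ℝ) ≤ r) :
    c ^ 2 ≤ ∑ i with ¬p i, x i ^ 2 := by
  have hsupp : #{i | (if p i then x i else 0) ≠ 0} ≤ #{i | p i} :=
    card_le_card <| monotone_filter_right _ fun i _ h => by_contra fun hp => h (if_neg hp)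
  have := hinc _ ((Nat.cast_le.2 hsupp).trans hp)
  rwa [sum_sq_sub_ite, Real.le_sqrt hc (sum_nonneg fun _ _ => sq_nonneg _)] at this

lemma sum_sq_filter_abs_le_le (x : ι → ℝ) (a b : ℝ) :
    ∑ i with |x i| ≤ a, x i ^ 2 ≤
      #{i | b ≤ |x i| ∧ |x i| ≤ a} * a ^ 2 + Fintype.card ι * b ^ 2 := by
  rw [← sum_filter_add_sum_filter_not _ (fun i => b ≤ |x i|), filter_filter, filter_filter]
  gcongr
  · rw [filter_congr fun _ _ => and_comm]
    exact sum_sq_le_card_mul_sq fun i hi => (mem_filter.1 hi).2.2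
  · calc _ ≤ (#{i | |x i| ≤ a ∧ ¬b ≤ |x i|} : ℝ) * b ^ 2 :=
          sum_sq_le_card_mul_sq fun i hi => (not_le.1 (mem_filter.1 hi).2.2).le
      _ ≤ Fintype.card ι * b ^ 2 := by gcongr; exact card_filter_le _ _

end SpreadCoordinates

open SpreadCoordinates in
/-- Every incompressible unit vector has `≥ c₀c₁²n/2` coordinates of magnitude
between `c₁/√(2n)` and `1/√(c₀n)`. -/
theorem stmt10 (n : ℕ) (c₀ c₁ : ℝ) (hc₀ : c₀ ∈ Set.Ioo (0:ℝ) 1)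
    (hc₁ : c₁ ∈ Set.Ioo (0:ℝ) 1)
    (x : Fin n → ℝ) (hx : Real.sqrt (∑ i, x i ^ 2) = 1)
    (hinc : ∀ y : Fin n → ℝ,
      ((Finset.univ.filter fun i => y i ≠ 0).card : ℝ) ≤ c₀ * n →
      c₁ ≤ Real.sqrt (∑ i, (x i - y i) ^ 2)) :
    ∃ σ : Finset (Fin n), c₀ * c₁ ^ 2 * n / 2 ≤ (σ.card : ℝ) ∧
      ∀ k ∈ σ, c₁ / Real.sqrt (2 * n) ≤ |x k| ∧ |x k| ≤ 1 / Real.sqrt (c₀ * n) := by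
  have hsum : ∑ i, x i ^ 2 = 1 := Real.sqrt_eq_one.1 hx
  have hn : (0 : ℝ) < n := by
    rcases Nat.eq_zero_or_pos n with rfl | hn
    · simp at hsum
    · exact_mod_cast hn
  have hc₀n : 0 < c₀ * n := mul_pos hc₀.1 hn
  set a := 1 / √(c₀ * n)
  set b := c₁ / √(2 * n)
  have ha : a ^ 2 = 1 / (c₀ * n) := by rw [div_pow, one_pow, Real.sq_sqrt hc₀n.le]
  have hb : b ^ 2 = c₁ ^ 2 / (2 * n) := by rw [div_pow, Real.sq_sqrt (by positivity)]
  have hpeaks : (#{i | a < |x i|} : ℝ) ≤ c₀ * n := by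
    have := card_filter_lt_abs_mul_sq_le x (by positivity : 0 ≤ a)
    rwa [hsum, ha, mul_one_div, div_le_one hc₀n] at this
  have hmass := sq_le_sum_sq_filter_not_of_dist_sparse hc₁.1.le hinc _ hpeaks
  simp_rw [not_lt] at hmass
  have hsplit := sum_sq_filter_abs_le_le x a b
  rw [Fintype.card_fin, ha, hb] at hsplit
  set σ : Finset (Fin n) := {i | b ≤ |x i| ∧ |x i| ≤ a}
  refine ⟨σ, ?_, fun k hk => (mem_filter.1 hk).2⟩
  have : c₁ ^ 2 / 2 ≤ (#σ : ℝ) * (1 / (c₀ * n)) := by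
    have : (n : ℝ) * (c₁ ^ 2 / (2 * n)) = c₁ ^ 2 / 2 := by field_simp
    linarith
  rw [mul_one_div, le_div_iff₀ hc₀n] at this
  linarith
end

section
/- Let x₁, …, x_m ∈ ℝᴺ be unit vectors and let H ⊆ ℝᴺ be their span. For α > 0 and γ ∈ (0,1), define LCD_{α,γ}(H) := inf over unit vectors y ∈ H of LCD_{α,γ}(y), and define the multidimensional LCD of (x₁,…,x_m) as the infimum of ‖Θ‖₂ over Θ ∈ ℝ^m such that dist((⟨Θ,y₁⟩,…,⟨Θ,y_N⟩), ℤᴺ) < min(γ‖(⟨Θ,y₁⟩,…,⟨Θ,y_N⟩)‖₂, α), where y_j ∈ ℝ^m is the j-th 'column' vector (x_{1j},…,x_{mj}). Then √m · LCD_{α,γ}(x₁,…,x_m) ≥ LCD_{α,γ}(H). -/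
/-- Euclidean distance from `v` to the integer lattice `ℤᴺ`. -/
noncomputable def latticeDist (N : ℕ) (v : Fin N → ℝ) : ℝ :=
  sInf {d | ∃ p : Fin N → ℤ, d = Real.sqrt (∑ i, (v i - (p i : ℝ)) ^ 2)}

/-- The essential least common denominator of a vector. -/
noncomputable def eLCD (N : ℕ) (α γ : ℝ) (x : Fin N → ℝ) : ℝ :=
  sInf {θ : ℝ | 0 < θ ∧
    latticeDist N (θ • x) < min (γ * Real.sqrt (∑ i, (θ * x i) ^ 2)) α}

/-!
A vector `Θ` admissible for the multidimensional LCD yields `v = ∑ Θᵢ xᵢ ∈ H` with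
`dist(v, ℤᴺ) < min(γ‖v‖₂, α)`; then `y = v / ‖v‖₂` is a unit vector of `H` with
`LCD(y) ≤ ‖v‖₂`, and `‖v‖₂ ≤ ∑ |Θᵢ| ≤ √m ‖Θ‖₂` by the triangle and Cauchy–Schwarz inequalities.
If no `Θ` is admissible, then no multiple of a vector of `H` is close to `ℤᴺ`, so every
LCD over `H` is the infimum of the empty set, namely `0`.
-/

open Finset Submodule

lemma Real.le_mul_sInf {a c : ℝ} {s : Set ℝ} (hc : 0 ≤ c) (hs : ∀ r ∈ s, a ≤ c * r)
    (hempty : s = ∅ → a ≤ 0) : a ≤ c * sInf s := by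
  rcases s.eq_empty_or_nonempty with rfl | hne
  · simpa using hempty rfl
  · open scoped Pointwise in
    rw [← smul_eq_mul, ← Real.sInf_smul_of_nonneg hc]
    exact le_csInf hne.smul_set (by rintro _ ⟨r, hr, rfl⟩; exact hs r hr)

section EuclideanNorm

variable {ι κ : Type*} [Fintype ι] [Fintype κ]

lemma sqrt_sum_sq_eq_norm_toLp (v : ι → ℝ) : √(∑ i, v i ^ 2) = ‖WithLp.toLp 2 v‖ := by
  simp [EuclideanSpace.norm_eq]

lemma sqrt_sum_mul_sq (c : ℝ) (v : ι → ℝ) :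
    √(∑ i, (c * v i) ^ 2) = |c| * √(∑ i, v i ^ 2) := by
  simp only [mul_pow, ← mul_sum, Real.sqrt_mul (sq_nonneg c), Real.sqrt_sq_eq_abs]

lemma sum_abs_le_sqrt_card_mul_sqrt_sum_sq (Θ : ι → ℝ) :
    ∑ i, |Θ i| ≤ √(Fintype.card ι) * √(∑ i, Θ i ^ 2) := by
  simpa using Real.sum_mul_le_sqrt_mul_sqrt univ (fun _ => (1 : ℝ)) (fun i => |Θ i|)

lemma sqrt_sum_sq_sum_mul_le (x : ι → κ → ℝ) (hx : ∀ i, √(∑ j, x i j ^ 2) = 1) (Θ : ι → ℝ) :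
    √(∑ j, (∑ i, Θ i * x i j) ^ 2) ≤ √(Fintype.card ι) * √(∑ i, Θ i ^ 2) :=
  calc √(∑ j, (∑ i, Θ i * x i j) ^ 2) = ‖∑ i, Θ i • WithLp.toLp 2 (x i)‖ := by
        rw [sqrt_sum_sq_eq_norm_toLp]
        congr 1
        ext j
        simp
    _ ≤ ∑ i, |Θ i| := by
        refine (norm_sum_le _ _).trans (sum_le_sum fun i _ => ?_)
        rw [norm_smul, ← sqrt_sum_sq_eq_norm_toLp, hx, Real.norm_eq_abs, mul_one]
    _ ≤ √(Fintype.card ι) * √(∑ i, Θ i ^ 2) := sum_abs_le_sqrt_card_mul_sqrt_sum_sq Θ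

end EuclideanNorm

section LCD

variable {N m : ℕ} {α γ : ℝ}

def IsLatticeClose (N : ℕ) (α γ : ℝ) (v : Fin N → ℝ) : Prop :=
  latticeDist N v < min (γ * √(∑ j, v j ^ 2)) α

/-- `LCD_{α,γ}(H)`. -/
noncomputable def subspaceLCD (N : ℕ) (α γ : ℝ) (H : Submodule ℝ (Fin N → ℝ)) : ℝ :=
  sInf {r | ∃ y ∈ H, √(∑ j, y j ^ 2) = 1 ∧ r = eLCD N α γ y}

/-- `LCD_{α,γ}(x₁, …, x_m)`; the `j`-th coordinate of `∑ i, Θ i • x i` is `⟨Θ, y_j⟩`. -/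
noncomputable def multiLCD (N m : ℕ) (α γ : ℝ) (x : Fin m → Fin N → ℝ) : ℝ :=
  sInf {r | ∃ Θ : Fin m → ℝ, r = √(∑ i, Θ i ^ 2) ∧
    IsLatticeClose N α γ (fun j => ∑ i, Θ i * x i j)}

lemma latticeDist_nonneg (v : Fin N → ℝ) : 0 ≤ latticeDist N v :=
  Real.sInf_nonneg <| by rintro _ ⟨p, rfl⟩; positivity

lemma eLCD_nonneg (y : Fin N → ℝ) : 0 ≤ eLCD N α γ y :=
  Real.sInf_nonneg fun _ hθ => hθ.1.le

lemma eLCD_le {y : Fin N → ℝ} {θ : ℝ} (hθ : 0 < θ) (h : IsLatticeClose N α γ (θ • y)) :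
    eLCD N α γ y ≤ θ :=
  csInf_le ⟨0, fun _ hθ' => hθ'.1.le⟩ ⟨hθ, h⟩

lemma eLCD_eq_zero {y : Fin N → ℝ} (h : ∀ θ : ℝ, 0 < θ → ¬IsLatticeClose N α γ (θ • y)) :
    eLCD N α γ y = 0 := by
  rw [eLCD]
  convert Real.sInf_empty
  exact Set.eq_empty_of_forall_notMem fun θ (hθ : 0 < θ ∧ IsLatticeClose N α γ (θ • y)) =>
    h θ hθ.1 hθ.2

lemma IsLatticeClose.sqrt_sum_sq_pos {v : Fin N → ℝ} (h : IsLatticeClose N α γ v) :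
    0 < √(∑ j, v j ^ 2) := by
  refine (Real.sqrt_nonneg _).lt_of_ne' fun h0 => ?_
  have := h.trans_le (min_le_left _ _)
  rw [h0, mul_zero] at this
  exact (latticeDist_nonneg v).not_gt this

lemma subspaceLCD_le_eLCD {H : Submodule ℝ (Fin N → ℝ)} {y : Fin N → ℝ} (hy : y ∈ H)
    (hy1 : √(∑ j, y j ^ 2) = 1) : subspaceLCD N α γ H ≤ eLCD N α γ y :=
  csInf_le ⟨0, by rintro _ ⟨y, -, -, rfl⟩; exact eLCD_nonneg y⟩ ⟨y, hy, hy1, rfl⟩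

lemma subspaceLCD_le_sqrt_sum_sq {H : Submodule ℝ (Fin N → ℝ)} {v : Fin N → ℝ} (hv : v ∈ H)
    (h : IsLatticeClose N α γ v) : subspaceLCD N α γ H ≤ √(∑ j, v j ^ 2) := by
  set t := √(∑ j, v j ^ 2)
  have ht : 0 < t := h.sqrt_sum_sq_pos
  have hunit : √(∑ j, (t⁻¹ • v) j ^ 2) = 1 := by
    simp only [Pi.smul_apply, smul_eq_mul]
    rw [sqrt_sum_mul_sq, abs_of_pos (inv_pos.2 ht), inv_mul_cancel₀ ht.ne']
  calc subspaceLCD N α γ H ≤ eLCD N α γ (t⁻¹ • v) := subspaceLCD_le_eLCD (H.smul_mem _ hv) hunit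
    _ ≤ t := eLCD_le ht (by rwa [smul_inv_smul₀ ht.ne'])

variable {x : Fin m → Fin N → ℝ}

lemma subspaceLCD_span_le_sqrt_mul (hx : ∀ i, √(∑ j, x i j ^ 2) = 1) {Θ : Fin m → ℝ}
    (hΘ : IsLatticeClose N α γ (fun j => ∑ i, Θ i * x i j)) :
    subspaceLCD N α γ (span ℝ (Set.range x)) ≤ √m * √(∑ i, Θ i ^ 2) := by
  have hmem : (fun j => ∑ i, Θ i * x i j) ∈ span ℝ (Set.range x) :=
    (mem_span_range_iff_exists_fun ℝ).2 ⟨Θ, by ext j; simp⟩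
  calc _ ≤ _ := subspaceLCD_le_sqrt_sum_sq hmem hΘ
    _ ≤ _ := by simpa using sqrt_sum_sq_sum_mul_le x hx Θ

lemma subspaceLCD_span_nonpos
    (h : ∀ Θ : Fin m → ℝ, ¬IsLatticeClose N α γ (fun j => ∑ i, Θ i * x i j)) :
    subspaceLCD N α γ (span ℝ (Set.range x)) ≤ 0 := by
  refine Real.sInf_nonpos ?_
  rintro _ ⟨y, hy, -, rfl⟩
  obtain ⟨c, rfl⟩ := (mem_span_range_iff_exists_fun ℝ).1 hy
  refine (eLCD_eq_zero fun θ _ hθ => h (θ • c) ?_).le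
  convert hθ using 2
  simp [mul_sum, mul_assoc]

end LCD

theorem stmt13_general (N m : ℕ) (α γ : ℝ)
    (x : Fin m → Fin N → ℝ) (hx : ∀ i, Real.sqrt (∑ j, x i j ^ 2) = 1)
    (H : Submodule ℝ (Fin N → ℝ)) (hH : H = Submodule.span ℝ (Set.range x)) :
    sInf {r | ∃ y ∈ H, Real.sqrt (∑ j, y j ^ 2) = 1 ∧ r = eLCD N α γ y} ≤
      Real.sqrt m *
        sInf {r | ∃ Θ : Fin m → ℝ, r = Real.sqrt (∑ i, Θ i ^ 2) ∧
          latticeDist N (fun j => ∑ i, Θ i * x i j) <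
            min (γ * Real.sqrt (∑ j, (∑ i, Θ i * x i j) ^ 2)) α} := by
  subst hH
  change subspaceLCD N α γ _ ≤ √m * multiLCD N m α γ x
  refine Real.le_mul_sInf (Real.sqrt_nonneg _) ?_ fun hempty => ?_
  · rintro _ ⟨Θ, rfl, hΘ⟩
    exact subspaceLCD_span_le_sqrt_mul hx hΘ
  · exact subspaceLCD_span_nonpos fun Θ hΘ =>
      Set.eq_empty_iff_forall_notMem.1 hempty _ ⟨Θ, rfl, hΘ⟩

/-- For unit vectors `x₁,…,x_m` spanning `H`,
`√m · LCD_{α,γ}(x₁,…,x_m) ≥ LCD_{α,γ}(H)`, where `LCD_{α,γ}(H)` is the infimum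
of the LCD over unit vectors of `H`, and the multidimensional LCD is the infimum
of `‖Θ‖₂` over `Θ` with `dist((⟨Θ,y_j⟩)_j, ℤᴺ) < min(γ‖(⟨Θ,y_j⟩)_j‖₂, α)`. -/
theorem stmt13 (N m : ℕ) (α γ : ℝ) (hα : 0 < α) (hγ : γ ∈ Set.Ioo (0:ℝ) 1)
    (x : Fin m → Fin N → ℝ) (hx : ∀ i, Real.sqrt (∑ j, x i j ^ 2) = 1)
    (H : Submodule ℝ (Fin N → ℝ)) (hH : H = Submodule.span ℝ (Set.range x)) :
    sInf {r | ∃ y ∈ H, Real.sqrt (∑ j, y j ^ 2) = 1 ∧ r = eLCD N α γ y} ≤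
      Real.sqrt m *
        sInf {r | ∃ Θ : Fin m → ℝ, r = Real.sqrt (∑ i, Θ i ^ 2) ∧
          latticeDist N (fun j => ∑ i, Θ i * x i j) <
            min (γ * Real.sqrt (∑ j, (∑ i, Θ i * x i j) ^ 2)) α} :=
  stmt13_general N m α γ x hx H hH
end
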